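/- (Hammock formula for ℤA_{n+1}; Figure 5) Fix n ≥ 1 and vertices x = (p,r) and y = (q,s) of ℤA_{n+1}. Then h(y,x) ≤ 1, and h(y,x) = 1 if and only if q ≤ p, p ≤ q+s, q+s ≤ p+r and p+r ≤ q+n. In particular H((p,r)) is the slanted rectangle { (q,s) : q ≤ p ≤ q+s ≤ p+r ≤ q+n }. -/
import Mathlib


/-- Sum over the arrows `y → v` of `ℤA_{n+1}` of the value `f v`. The vertex set of
`ℤA_{n+1}` is `ℤ × {0,…,n}`, with arrows `(q,s) → (q,s+1)` for `s < n` and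
`(q,s) → (q+1,s-1)` for `0 < s`. -/
def stepA (n : ℕ) (f : ℤ × ℕ → ℕ) (y : ℤ × ℕ) : ℤ :=
  (if y.2 < n then (f (y.1, y.2 + 1) : ℤ) else 0) +
    (if 0 < y.2 then (f (y.1 + 1, y.2 - 1) : ℤ) else 0)

/-- `hA n x k y` is `h_k(y,x)` for `ℤA_{n+1}`: `h_0(y,x) = δ(y,x)` and, for `k > 0`,
`h_k(y,x) = max(h'_k(y,x), 0)` where
`h'_k(y,x) = ∑_{y → v} h_{k-1}(v,x) - h_{k-2}(τ⁻¹ y, x)` and `τ⁻¹(q,s) = (q+1,s)`. -/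
def hA (n : ℕ) (x : ℤ × ℕ) : ℕ → ℤ × ℕ → ℕ
  | 0 => fun y => if y = x then 1 else 0
  | 1 => fun y => (stepA n (hA n x 0) y).toNat
  | k + 2 => fun y =>
      (stepA n (hA n x (k + 1)) y - (hA n x k (y.1 + 1, y.2) : ℤ)).toNat

/-- `h'A n x k y` is `h'_k(y,x)` (meaningful for `k ≥ 1`):
`h'_k(y,x) = ∑_{y → v} h_{k-1}(v,x) - h_{k-2}(τ⁻¹ y, x) ∈ ℤ`. -/
def h'A (n : ℕ) (x : ℤ × ℕ) (k : ℕ) (y : ℤ × ℕ) : ℤ :=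
  stepA n (hA n x (k - 1)) y -
    (if 2 ≤ k then (hA n x (k - 2) (y.1 + 1, y.2) : ℤ) else 0)

/-- `hTotA n y x = h(y,x) = ∑_{k ≥ 0} h_k(y,x)` (a finite sum, via `finsum`). -/
noncomputable def hTotA (n : ℕ) (y x : ℤ × ℕ) : ℕ := ∑ᶠ k : ℕ, hA n x k y

lemma hA_eq (n : ℕ) (p : ℤ) (r : ℕ) (hr : r ≤ n) :
    ∀ k (q : ℤ) (s : ℕ), s ≤ n →
      hA n (p, r) k (q, s) =
        if q ≤ p ∧ p ≤ q + (s:ℤ) ∧ q + (s:ℤ) ≤ p + (r:ℤ) ∧ p + (r:ℤ) ≤ q + (n:ℤ) ∧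
            (k : ℤ) = 2*p + r - 2*q - s then 1 else 0 := by
  intro k
  induction k using Nat.strong_induction_on with
  | _ k IH =>
    match k with
    | 0 =>
      intro q s hs
      simp only [hA, Prod.mk.injEq]
      split_ifs <;> omega
    | 1 =>
      intro q s hs
      simp only [hA, stepA, Prod.mk.injEq]
      simp only [Nat.cast_ite, Nat.cast_one, Nat.cast_zero]
      split_ifs <;> omega
    | (m+2) =>
      intro q s hs
      have IH0 := IH m (by omega) (q+1) s hs
      show (stepA n (hA n (p,r) (m+1)) (q,s) - (hA n (p,r) m (q+1, s) : ℤ)).toNat = _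
      rw [IH0, stepA]
      by_cases h1 : s < n <;> by_cases h2 : 0 < s
      · rw [if_pos h1, if_pos h2, IH (m+1) (by omega) q (s+1) (by omega),
          IH (m+1) (by omega) (q+1) (s-1) (by omega)]
        simp only [Nat.cast_ite, Nat.cast_one, Nat.cast_zero]
        split_ifs <;> omega
      · rw [if_pos h1, if_neg h2, IH (m+1) (by omega) q (s+1) (by omega)]
        simp only [Nat.cast_ite, Nat.cast_one, Nat.cast_zero]
        split_ifs <;> omega
      · rw [if_neg h1, if_pos h2, IH (m+1) (by omega) (q+1) (s-1) (by omega)]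
        simp only [Nat.cast_ite, Nat.cast_one, Nat.cast_zero]
        split_ifs <;> omega
      · rw [if_neg h1, if_neg h2]
        simp only [Nat.cast_ite, Nat.cast_one, Nat.cast_zero]
        split_ifs <;> omega

lemma hTot_eq (n : ℕ) (p : ℤ) (r : ℕ) (hr : r ≤ n) (q : ℤ) (s : ℕ) (hs : s ≤ n) :
    hTotA n (q, s) (p, r) =
      if q ≤ p ∧ p ≤ q + (s:ℤ) ∧ q + (s:ℤ) ≤ p + (r:ℤ) ∧ p + (r:ℤ) ≤ q + (n:ℤ)
      then 1 else 0 := by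
  unfold hTotA
  split_ifs with h
  · have hK : ((2*p + r - 2*q - s).toNat : ℤ) = 2*p + r - 2*q - s := by omega
    rw [finsum_eq_single _ (2*p + r - 2*q - s).toNat]
    · rw [hA_eq n p r hr _ q s hs, if_pos ⟨h.1, h.2.1, h.2.2.1, h.2.2.2, hK⟩]
    · intro b hb
      rw [hA_eq n p r hr b q s hs, if_neg]
      rintro ⟨-, -, -, -, hb'⟩
      exact hb (by omega)
  · apply finsum_eq_zero_of_forall_eq_zero
    intro k
    rw [hA_eq n p r hr k q s hs, if_neg]
    rintro ⟨a, b, c, d, -⟩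
    exact h ⟨a, b, c, d⟩

/-- Hammock formula for `ℤA_{n+1}` (Figure 5): for vertices `x = (p,r)` and
`y = (q,s)` of `ℤA_{n+1}`, `h(y,x) ≤ 1`, and `h(y,x) = 1` iff
`q ≤ p ≤ q+s ≤ p+r ≤ q+n`; in particular `H((p,r))` is the slanted rectangle
`{(q,s) : q ≤ p ≤ q+s ≤ p+r ≤ q+n}`. -/
theorem hammock_ZA (n : ℕ) (hn : 1 ≤ n) (p : ℤ) (r : ℕ) (hr : r ≤ n) :
    (∀ (q : ℤ) (s : ℕ), s ≤ n →
      hTotA n (q, s) (p, r) ≤ 1 ∧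
        (hTotA n (q, s) (p, r) = 1 ↔
          q ≤ p ∧ p ≤ q + (s : ℤ) ∧ q + (s : ℤ) ≤ p + (r : ℤ) ∧
            p + (r : ℤ) ≤ q + (n : ℤ))) ∧
      {y : ℤ × ℕ | y.2 ≤ n ∧ 0 < hTotA n y (p, r)} =
        {y : ℤ × ℕ | y.2 ≤ n ∧ y.1 ≤ p ∧ p ≤ y.1 + (y.2 : ℤ) ∧
          y.1 + (y.2 : ℤ) ≤ p + (r : ℤ) ∧ p + (r : ℤ) ≤ y.1 + (n : ℤ)} := by
  constructor
  · intro q s hs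
    rw [hTot_eq n p r hr q s hs]
    split_ifs with h
    · exact ⟨le_refl 1, by simp [h]⟩
    · exact ⟨by omega, by simp [h]⟩
  · ext ⟨q, s⟩
    simp only [Set.mem_setOf_eq]
    constructor
    · rintro ⟨hs, hpos⟩
      rw [hTot_eq n p r hr q s hs] at hpos
      split_ifs at hpos with h
      · exact ⟨hs, h.1, h.2.1, h.2.2.1, h.2.2.2⟩
      · omega
    · rintro ⟨hs, h1, h2, h3, h4⟩
      refine ⟨hs, ?_⟩
      rw [hTot_eq n p r hr q s hs, if_pos ⟨h1, h2, h3, h4⟩]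
      omega
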